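/- Assume conditions (P0)–(P3) hold for the sequence (q_{M_L}, φ_{M_L}) indexed by even positive integers L, and assume M_L² / log L → ∞ as L → ∞. Define G_L(x, λ) = (1/L²) ∑_{y ∈ T_L} e^{2πi x·y / L} / (1 + λ − φ_{M_L}(2π y / L)) for x ∈ T_L and λ > 0. Then for every λ > 0, lim_{L→∞} sup_{x ∈ T'_L} |G_L(x, λ/L²) / G_L(0, λ/L²) − (1 + λ)^{−1}| = 0. (For the rate-one continuous-time random walk X^L on the torus T_L with jump distribution q_{M_L} and H_L the hitting time of 0, the ratio G_L(x,λ)/G_L(0,λ) equals E_x(e^{−λ H_L}), so this is the homogeneous-mixing exponential limit law of Theorem 1.2.) -/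

import Mathlib

/-!
With `μ = λ / L²`, splitting `1 / (1 + μ - φ) = (1 + μ)⁻¹ (1 + φ / (1 + μ - φ))` and using
orthogonality of the characters `y ↦ e^{2πi x·y/L}` on `T_L` gives
`G_L(x, μ) = (1 + μ)⁻¹ (𝟙[x = 0] + λ⁻¹ + R_L(x))`, where `λ⁻¹` is the zero-frequency term.
Uniformly in `x`, `|R_L(x)| ≤ L⁻² ∑_{y ≠ 0} |φ(θ_y)| / (1 - φ(θ_y))`, and this tends to `0`:
on `|θ| ≤ δ/M` (P1) gives `1 - φ ≳ σ² M² |θ|²`, so these frequencies contribute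
`O(log L / M²)`; on `δ/M < |θ| ≤ a` (P2) gives `1 - φ > ζ` on `O(a² L²)` points; for `|θ| > a`
(P3) makes `|φ|` small. Hence the ratio tends to `λ⁻¹ / (1 + λ⁻¹) = (1 + λ)⁻¹`.
-/

open Filter MeasureTheory Real Finset
open scoped BigOperators

noncomputable section

/-- `T_k = (−k/2, k/2]² ∩ ℤ²`. -/
def Tset (k : ℝ) : Finset (ℤ × ℤ) :=
  Finset.Ioc ⌊-k / 2⌋ ⌊k / 2⌋ ×ˢ Finset.Ioc ⌊-k / 2⌋ ⌊k / 2⌋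

/-- `Λ_k = [−k/2, k/2]² ∩ ℤ²`. -/
def Lam (k : ℝ) : Finset (ℤ × ℤ) :=
  Finset.Icc ⌈-k / 2⌉ ⌊k / 2⌋ ×ˢ Finset.Icc ⌈-k / 2⌉ ⌊k / 2⌋

open scoped Classical in
/-- `D_k = {x ∈ ℤ² : |x| ≤ k/2}` (Euclidean norm). -/
def Dset (k : ℝ) : Finset (ℤ × ℤ) :=
  (Lam k).filter fun x => Real.sqrt ((x.1 : ℝ) ^ 2 + (x.2 : ℝ) ^ 2) ≤ k / 2

/-- sup (ℓ∞) norm on ℝ². -/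
def supNorm (θ : ℝ × ℝ) : ℝ := max |θ.1| |θ.2|

/-- the closed ℓ∞-ball `B(r)` in ℝ². -/
def Bset (r : ℝ) : Set (ℝ × ℝ) := {θ | supNorm θ ≤ r}

/-- squared Euclidean norm `|θ|²` on ℝ². -/
def sqNormR (θ : ℝ × ℝ) : ℝ := θ.1 ^ 2 + θ.2 ^ 2

/-- squared Euclidean norm `|y|²` of a lattice point. -/
def sqNorm (y : ℤ × ℤ) : ℝ := (y.1 : ℝ) ^ 2 + (y.2 : ℝ) ^ 2

/-- dot product `θ · x` of θ ∈ ℝ² and x ∈ ℤ². -/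
def dotP (θ : ℝ × ℝ) (x : ℤ × ℤ) : ℝ := θ.1 * x.1 + θ.2 * x.2

/-- `e^{iθ·x}`. -/
def cexp (θ : ℝ × ℝ) (x : ℤ × ℤ) : ℂ := Complex.exp (Complex.I * (dotP θ x : ℂ))

/-- `e^{2πi x·y/L}`. -/
def eL (L : ℕ) (x y : ℤ × ℤ) : ℂ :=
  Complex.exp (2 * (π : ℂ) * Complex.I * ((x.1 * y.1 + x.2 * y.2 : ℤ) : ℂ) / (L : ℂ))

/-- the filter of large even natural numbers. -/
def evenAtTop : Filter ℕ := Filter.atTop ⊓ Filter.principal {n | Even n}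

/-- the Fourier point `2πy/L ∈ ℝ²`. -/
def fourierTheta (L : ℕ) (y : ℤ × ℤ) : ℝ × ℝ := (2 * π * y.1 / L, 2 * π * y.2 / L)

/-- the characteristic function `φ(θ) = ∑_x e^{iθ·x} q(x)` of a jump distribution
supported in `Λ_m`; it is real-valued by symmetry, so we take the real part. -/
def phiOf (m : ℕ) (qq : ℤ × ℤ → ℝ) (θ : ℝ × ℝ) : ℝ :=
  (∑ x ∈ Lam m, cexp θ x * (qq x : ℂ)).re

/-- Condition (P0): `q` is a symmetric probability distribution supported in
`Λ'_m = Λ_m \ {0}`, with values in [0,1] and equal, positive coordinate variances. -/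
def CondP0 (m : ℕ) (qq : ℤ × ℤ → ℝ) : Prop :=
  (∀ x, 0 ≤ qq x ∧ qq x ≤ 1) ∧
  (∀ x, x ∉ (Lam m).erase 0 → qq x = 0) ∧
  (∑ x ∈ (Lam m).erase 0, qq x = 1) ∧
  (∀ x, qq (-x) = qq x) ∧
  (∑ x ∈ Lam m, (x.1 : ℝ) ^ 2 * qq x = ∑ x ∈ Lam m, (x.2 : ℝ) ^ 2 * qq x) ∧
  (0 < ∑ x ∈ Lam m, (x.1 : ℝ) ^ 2 * qq x)

/-- Condition (P1) with constant `σ² = σ2`. -/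
def CondP1 (M : ℕ → ℕ) (q : ℕ → ℤ × ℤ → ℝ) (σ2 : ℝ) : Prop :=
  ∀ ε > (0 : ℝ), ∃ δ > (0 : ℝ), ∀ᶠ (L : ℕ) in evenAtTop, ∀ θ : ℝ × ℝ, θ ≠ 0 →
    supNorm θ ≤ δ / M L →
    (1 - phiOf (M L) (q L) θ) / (σ2 * (M L : ℝ) ^ 2 * sqNormR θ / 2)
      ∈ Set.Ioo (1 - ε) (1 + ε)

/-- Condition (P2). -/
def CondP2 (M : ℕ → ℕ) (q : ℕ → ℤ × ℤ → ℝ) : Prop :=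
  ∀ δ > (0 : ℝ), ∃ δ' > (0 : ℝ), ∃ ζ > (0 : ℝ), ∀ᶠ (L : ℕ) in evenAtTop, ∀ θ : ℝ × ℝ,
    supNorm θ ≤ δ' → ¬ supNorm θ ≤ δ / M L → 1 - phiOf (M L) (q L) θ > ζ

/-- Condition (P3). -/
def CondP3 (M : ℕ → ℕ) (q : ℕ → ℤ × ℤ → ℝ) : Prop :=
  ∀ ε > (0 : ℝ), ∀ a > (0 : ℝ), ∀ᶠ (L : ℕ) in evenAtTop, ∀ θ : ℝ × ℝ,
    supNorm θ ≤ π → ¬ supNorm θ ≤ a → |phiOf (M L) (q L) θ| < ε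

/-- `G_L(x,λ) = L⁻² ∑_{y ∈ T_L} e^{2πi x·y/L} / (1 + λ − φ_{M_L}(2πy/L))`. -/
def Gfun (M : ℕ → ℕ) (q : ℕ → ℤ × ℤ → ℝ) (L : ℕ) (x : ℤ × ℤ) (lam : ℝ) : ℂ :=
  ((L : ℂ) ^ 2)⁻¹ * ∑ y ∈ Tset L,
    eL L x y / ((1 + lam - phiOf (M L) (q L) (fourierTheta L y) : ℝ) : ℂ)

open scoped Classical in
/-- the annulus `A_L(α, v)`. -/
def Aset (L : ℕ) (α v : ℝ) : Finset (ℤ × ℤ) :=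
  if α = 0 then (Tset v).erase 0
  else if α = 1 then Tset L \ Tset (L / v)
  else Tset ((L : ℝ) ^ α * v) \ Tset ((L : ℝ) ^ α / v)

/-- the uniform distribution `u_m` on `Λ'_m = Λ_m \ {0}`. -/
def uunif (m : ℕ) (x : ℤ × ℤ) : ℝ :=
  if x ∈ (Lam m).erase 0 then (((Lam m).erase 0).card : ℝ)⁻¹ else 0

/-- `q_M(x) = c_M f(x/M) u_M(x)`. -/
def qMf (f : ℝ × ℝ → ℝ) (c : ℕ → ℝ) (m : ℕ) (x : ℤ × ℤ) : ℝ :=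
  c m * f ((x.1 : ℝ) / m, (x.2 : ℝ) / m) * uunif m x

open scoped Topology

lemma mem_Tset {k : ℝ} {y : ℤ × ℤ} :
    y ∈ Tset k ↔ (-k / 2 < y.1 ∧ (y.1 : ℝ) ≤ k / 2) ∧ (-k / 2 < y.2 ∧ (y.2 : ℝ) ≤ k / 2) := by
  simp only [Tset, mem_product, mem_Ioc, Int.floor_lt, Int.le_floor]

lemma Tset_natCast (L : ℕ) :
    Tset L =
      Ioc ⌊-(L : ℝ) / 2⌋ (⌊-(L : ℝ) / 2⌋ + L) ×ˢ Ioc ⌊-(L : ℝ) / 2⌋ (⌊-(L : ℝ) / 2⌋ + L) := by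
  rw [Tset, ← Int.floor_add_natCast]
  ring_nf

lemma card_Tset (L : ℕ) : #(Tset L) = L ^ 2 := by
  simp [Tset_natCast, Int.card_Ioc, sq]

lemma zero_mem_Tset {L : ℕ} (hL : 0 < L) : (0 : ℤ × ℤ) ∈ Tset L := by
  have : (0 : ℝ) < L := by exact_mod_cast hL
  simp only [mem_Tset, Prod.fst_zero, Prod.snd_zero, Int.cast_zero]
  constructor <;> constructor <;> linarith

def natSupNorm (y : ℤ × ℤ) : ℕ := max y.1.natAbs y.2.natAbs

lemma natSupNorm_eq_zero {y : ℤ × ℤ} : natSupNorm y = 0 ↔ y = 0 := by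
  simp [natSupNorm, Prod.ext_iff]

lemma two_mul_natSupNorm_le {L : ℕ} {y : ℤ × ℤ} (hy : y ∈ Tset L) : 2 * natSupNorm y ≤ L := by
  have key : ∀ t : ℤ, -(L : ℝ) / 2 < t → (t : ℝ) ≤ L / 2 → -(L : ℤ) < 2 * t ∧ 2 * t ≤ L := by
    intro t h1 h2
    constructor
    · have : -(L : ℝ) < 2 * t := by linarith
      exact_mod_cast this
    · have : 2 * (t : ℝ) ≤ L := by linarith
      exact_mod_cast this
  rw [mem_Tset] at hy
  have h1 := key _ hy.1.1 hy.1.2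
  have h2 := key _ hy.2.1 hy.2.2
  simp only [natSupNorm]
  omega

lemma sq_natSupNorm_le_sqNorm (y : ℤ × ℤ) : (natSupNorm y : ℝ) ^ 2 ≤ sqNorm y := by
  have h1 : ((y.1.natAbs : ℕ) : ℝ) ^ 2 = (y.1 : ℝ) ^ 2 := by
    rw [Nat.cast_natAbs, Int.cast_abs, sq_abs]
  have h2 : ((y.2.natAbs : ℕ) : ℝ) ^ 2 = (y.2 : ℝ) ^ 2 := by
    rw [Nat.cast_natAbs, Int.cast_abs, sq_abs]
  rw [natSupNorm, sqNorm, Nat.cast_max]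
  rcases le_total (y.1.natAbs : ℝ) (y.2.natAbs : ℝ) with h | h
  · rw [max_eq_right h, h2]; nlinarith
  · rw [max_eq_left h, h1]; nlinarith

lemma supNorm_fourierTheta (L : ℕ) (y : ℤ × ℤ) :
    supNorm (fourierTheta L y) = 2 * π * natSupNorm y / L := by
  have h : ∀ t : ℤ, |2 * π * t / L| = 2 * π * t.natAbs / L := by
    intro t
    rw [abs_div, abs_mul, Nat.abs_cast, Nat.cast_natAbs, Int.cast_abs,
      abs_of_pos (by positivity : (0 : ℝ) < 2 * π)]
  rw [supNorm, fourierTheta, h, h, max_div_div_right (by positivity),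
    ← mul_max_of_nonneg _ _ (by positivity), natSupNorm, Nat.cast_max]

lemma sqNormR_fourierTheta (L : ℕ) (y : ℤ × ℤ) :
    sqNormR (fourierTheta L y) = 4 * π ^ 2 * sqNorm y / L ^ 2 := by
  rw [sqNormR, fourierTheta, sqNorm]
  ring

lemma card_le_of_natSupNorm_le {s : Finset (ℤ × ℤ)} {r : ℝ} (hr : 0 ≤ r)
    (hs : ∀ y ∈ s, (natSupNorm y : ℝ) ≤ r) : (#s : ℝ) ≤ (2 * r + 1) ^ 2 := by
  set b : ℕ := ⌊r⌋₊
  have hsub : s ⊆ Icc (-(b : ℤ)) b ×ˢ Icc (-(b : ℤ)) b := by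
    intro y hy
    have hb : natSupNorm y ≤ b := Nat.le_floor (hs y hy)
    simp only [natSupNorm] at hb
    simp only [mem_product, mem_Icc]
    omega
  have hcard : #(Icc (-(b : ℤ)) b ×ˢ Icc (-(b : ℤ)) b) = (2 * b + 1) ^ 2 := by
    rw [card_product, Int.card_Icc, sq]
    congr 2 <;> omega
  calc (#s : ℝ) ≤ ((2 * b + 1) ^ 2 : ℕ) := by rw [← hcard]; exact_mod_cast card_le_card hsub
    _ ≤ (2 * r + 1) ^ 2 := by
      push_cast
      gcongr
      exact Nat.floor_le hr

lemma card_filter_natSupNorm_eq_le (s : Finset (ℤ × ℤ)) (j : ℕ) :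
    #(s.filter (natSupNorm · = j)) ≤ 8 * j + 4 := by
  have hsub : s.filter (natSupNorm · = j) ⊆
      (Icc (-(j : ℤ)) j ×ˢ {-(j : ℤ), (j : ℤ)}) ∪ ({-(j : ℤ), (j : ℤ)} ×ˢ Icc (-(j : ℤ)) j) := by
    intro y hy
    rw [mem_filter] at hy
    simp only [natSupNorm] at hy
    simp only [mem_union, mem_product, mem_Icc, mem_insert, mem_singleton]
    omega
  have hpair : #({-(j : ℤ), (j : ℤ)} : Finset ℤ) ≤ 2 := card_le_two
  have hIcc : #(Icc (-(j : ℤ)) j) = 2 * j + 1 := by rw [Int.card_Icc]; omega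
  calc #(s.filter (natSupNorm · = j)) ≤ _ := card_le_card hsub
    _ ≤ _ := card_union_le _ _
    _ ≤ 8 * j + 4 := by
      rw [card_product, card_product, hIcc]
      nlinarith

lemma sum_inv_sqNorm_le (L : ℕ) :
    ∑ y ∈ (Tset L).erase 0, (sqNorm y)⁻¹ ≤ 12 * (1 + Real.log L) := by
  set S := (Tset L).erase 0
  have hmaps : ∀ y ∈ S, natSupNorm y ∈ Icc 1 L := by
    intro y hy
    obtain ⟨hy0, hyT⟩ := mem_erase.1 hy
    have := two_mul_natSupNorm_le hyT
    have := mt natSupNorm_eq_zero.1 hy0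
    rw [mem_Icc]
    omega
  have hshell : ∀ j ∈ Icc 1 L,
      ∑ y ∈ S.filter (natSupNorm · = j), (sqNorm y)⁻¹ ≤ 12 * (j : ℝ)⁻¹ := by
    intro j hj
    have hj1 : (1 : ℝ) ≤ j := by exact_mod_cast (mem_Icc.1 hj).1
    have hterm : ∀ y ∈ S.filter (natSupNorm · = j), (sqNorm y)⁻¹ ≤ ((j : ℝ) ^ 2)⁻¹ := by
      intro y hy
      rw [← (mem_filter.1 hy).2]
      exact inv_anti₀ (by rw [(mem_filter.1 hy).2]; positivity) (sq_natSupNorm_le_sqNorm y)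
    have hcard : (#(S.filter (natSupNorm · = j)) : ℝ) ≤ 8 * j + 4 := by
      exact_mod_cast card_filter_natSupNorm_eq_le S j
    calc ∑ y ∈ S.filter (natSupNorm · = j), (sqNorm y)⁻¹
        ≤ #(S.filter (natSupNorm · = j)) * ((j : ℝ) ^ 2)⁻¹ := by
          simpa using sum_le_sum hterm
      _ ≤ (8 * j + 4) * ((j : ℝ) ^ 2)⁻¹ := by gcongr
      _ ≤ 12 * (j : ℝ)⁻¹ := by
          rw [← sub_nonneg]
          have : 12 * (j : ℝ)⁻¹ - (8 * j + 4) * ((j : ℝ) ^ 2)⁻¹ = 4 * (j - 1) / j ^ 2 := by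
            field_simp
            ring
          rw [this]
          have : (0 : ℝ) ≤ j - 1 := by linarith
          positivity
  calc ∑ y ∈ S, (sqNorm y)⁻¹ = ∑ j ∈ Icc 1 L, ∑ y ∈ S.filter (natSupNorm · = j), (sqNorm y)⁻¹ :=
        (sum_fiberwise_of_maps_to hmaps _).symm
    _ ≤ ∑ j ∈ Icc 1 L, 12 * (j : ℝ)⁻¹ := sum_le_sum hshell
    _ = 12 * harmonic L := by
        rw [← mul_sum, harmonic_eq_sum_Icc]
        push_cast
        rfl
    _ ≤ 12 * (1 + Real.log L) := by gcongr; exact harmonic_le_one_add_log L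

lemma sum_zpow_Ioc_eq_zero {K : Type*} [Field K] {ω : K} {n : ℕ} (hω : ω ≠ 1) (hωn : ω ^ n = 1)
    (a : ℤ) : ∑ t ∈ Ioc a (a + n), ω ^ t = 0 := by
  rcases Nat.eq_zero_or_pos n with rfl | hn
  · simp
  have hω0 : ω ≠ 0 := by rintro rfl; simp [zero_pow hn.ne'] at hωn
  rw [Int.Ioc_eq_finset_map, sum_map, add_sub_cancel_left, Int.toNat_natCast]
  simp only [Function.Embedding.trans_apply, Nat.castEmbedding_apply, addLeftEmbedding_apply,
    zpow_add₀ hω0, zpow_natCast, ← mul_sum, geom_sum_eq hω, hωn, sub_self, zero_div, mul_zero]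

lemma eL_eq_zpow (L : ℕ) (x y : ℤ × ℤ) :
    eL L x y = Complex.exp (2 * π * Complex.I / L) ^ (x.1 * y.1 + x.2 * y.2) := by
  rw [eL, ← Complex.exp_int_mul]
  ring_nf

lemma norm_eL (L : ℕ) (x y : ℤ × ℤ) : ‖eL L x y‖ = 1 := by
  rw [eL_eq_zpow, norm_zpow, Complex.norm_exp]
  simp

lemma eL_zero_left (L : ℕ) (y : ℤ × ℤ) : eL L 0 y = 1 := by
  simp [eL]

lemma eL_zero_right (L : ℕ) (x : ℤ × ℤ) : eL L x 0 = 1 := by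
  simp [eL]

lemma sum_exp_zpow_Ioc_eq_zero {L : ℕ} {m : ℤ} (hm : m ≠ 0) (hmL : 2 * m.natAbs ≤ L) (a : ℤ) :
    ∑ t ∈ Ioc a (a + L), (Complex.exp (2 * π * Complex.I / L) ^ m) ^ t = 0 := by
  have hL : L ≠ 0 := by have := Int.natAbs_pos.2 hm; omega
  have hζ := Complex.isPrimitiveRoot_exp L hL
  refine sum_zpow_Ioc_eq_zero (fun h1 => hm ?_) ?_ a
  · exact Int.eq_zero_of_abs_lt_dvd ((hζ.zpow_eq_one_iff_dvd m).1 h1)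
      (by rw [Int.abs_eq_natAbs]; omega)
  · rw [← zpow_natCast, ← zpow_mul, mul_comm m, zpow_mul, zpow_natCast, hζ.pow_eq_one, one_zpow]

lemma sum_eL_Tset {L : ℕ} {x : ℤ × ℤ} (hx : x ∈ Tset L) :
    ∑ y ∈ Tset L, eL L x y = if x = 0 then (L : ℂ) ^ 2 else 0 := by
  split_ifs with hx0
  · simp [hx0, eL_zero_left, card_Tset]
  set ζ := Complex.exp (2 * π * Complex.I / L)
  have hζ0 : ζ ≠ 0 := Complex.exp_ne_zero _
  have hsplit : ∀ y : ℤ × ℤ, eL L x y = (ζ ^ x.1) ^ y.1 * (ζ ^ x.2) ^ y.2 := by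
    intro y
    rw [eL_eq_zpow, zpow_add₀ hζ0, zpow_mul, zpow_mul]
  have hxL := two_mul_natSupNorm_le hx
  simp only [natSupNorm] at hxL
  rw [Tset_natCast, sum_product]
  simp only [hsplit, ← mul_sum, ← sum_mul]
  by_cases h1 : x.1 = 0
  · have h2 : x.2 ≠ 0 := fun h2 => hx0 (Prod.ext h1 h2)
    rw [sum_exp_zpow_Ioc_eq_zero h2 (by omega), mul_zero]
  · rw [sum_exp_zpow_Ioc_eq_zero h1 (by omega), zero_mul]

lemma sum_Lam_eq_one {m : ℕ} {qq : ℤ × ℤ → ℝ} (h : CondP0 m qq) : ∑ x ∈ Lam m, qq x = 1 := by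
  rw [← sum_erase _ (h.2.1 0 (notMem_erase 0 _)), h.2.2.1]

lemma abs_phiOf_le_one {m : ℕ} {qq : ℤ × ℤ → ℝ} (h : CondP0 m qq) (θ : ℝ × ℝ) :
    |phiOf m qq θ| ≤ 1 := by
  calc |phiOf m qq θ| ≤ ‖∑ x ∈ Lam m, cexp θ x * (qq x : ℂ)‖ := Complex.abs_re_le_norm _
    _ ≤ ∑ x ∈ Lam m, ‖cexp θ x * (qq x : ℂ)‖ := norm_sum_le _ _
    _ = ∑ x ∈ Lam m, qq x := by
        refine sum_congr rfl fun x _ => ?_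
        rw [norm_mul, cexp, Complex.norm_exp_I_mul_ofReal, one_mul, Complex.norm_real,
          Real.norm_of_nonneg (h.1 x).1]
    _ = 1 := sum_Lam_eq_one h

lemma phiOf_zero {m : ℕ} {qq : ℤ × ℤ → ℝ} (h : CondP0 m qq) : phiOf m qq 0 = 1 := by
  simp [phiOf, cexp, dotP, ← Complex.ofReal_sum, sum_Lam_eq_one h]

def greenRemainder (φ : ℝ × ℝ → ℝ) (L : ℕ) (x : ℤ × ℤ) (lam : ℝ) : ℂ :=
  ((L : ℂ) ^ 2)⁻¹ * ∑ y ∈ (Tset L).erase 0,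
    eL L x y * ((φ (fourierTheta L y) / (1 + lam - φ (fourierTheta L y)) : ℝ) : ℂ)

def remainderMass (φ : ℝ × ℝ → ℝ) (L : ℕ) (lam : ℝ) (s : Finset (ℤ × ℤ)) : ℝ :=
  ((L : ℝ) ^ 2)⁻¹ * ∑ y ∈ s, |φ (fourierTheta L y)| / (1 + lam - φ (fourierTheta L y))

lemma norm_greenRemainder_le {φ : ℝ × ℝ → ℝ} (hφ : ∀ θ, |φ θ| ≤ 1) (L : ℕ) (x : ℤ × ℤ)
    {lam : ℝ} (hlam : 0 ≤ lam) :
    ‖greenRemainder φ L x lam‖ ≤ remainderMass φ L lam ((Tset L).erase 0) := by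
  rw [greenRemainder, remainderMass, norm_mul, norm_inv, norm_pow, Complex.norm_natCast]
  gcongr
  refine (norm_sum_le _ _).trans (le_of_eq (sum_congr rfl fun y _ => ?_))
  have hd : 0 ≤ 1 + lam - φ (fourierTheta L y) := by linarith [(abs_le.1 (hφ (fourierTheta L y))).2]
  rw [norm_mul, norm_eL, one_mul, Complex.norm_real, Real.norm_eq_abs, abs_div, abs_of_nonneg hd]

lemma Gfun_eq (M : ℕ → ℕ) (q : ℕ → ℤ × ℤ → ℝ) {L : ℕ} (hL : 0 < L) (hP0 : CondP0 (M L) (q L))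
    {x : ℤ × ℤ} (hx : x ∈ Tset L) {lam : ℝ} (hlam : 0 < lam) :
    Gfun M q L x lam = ((1 + lam : ℝ) : ℂ)⁻¹ * ((if x = 0 then 1 else 0)
      + (((L : ℝ) ^ 2 * lam : ℝ) : ℂ)⁻¹ + greenRemainder (phiOf (M L) (q L)) L x lam) := by
  set φ := phiOf (M L) (q L)
  have hd : ∀ y, 0 < 1 + lam - φ (fourierTheta L y) := fun y => by
    linarith [(abs_le.1 (abs_phiOf_le_one hP0 (fourierTheta L y))).2]
  have hsplit : ∀ y, eL L x y / ((1 + lam - φ (fourierTheta L y) : ℝ) : ℂ) =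
      ((1 + lam : ℝ) : ℂ)⁻¹ * (eL L x y +
        eL L x y * ((φ (fourierTheta L y) / (1 + lam - φ (fourierTheta L y)) : ℝ) : ℂ)) := by
    intro y
    have h1 : ((1 + lam - φ (fourierTheta L y) : ℝ) : ℂ) ≠ 0 := by exact_mod_cast (hd y).ne'
    have h2 : ((1 + lam : ℝ) : ℂ) ≠ 0 := by exact_mod_cast (by linarith : (1 + lam : ℝ) ≠ 0)
    push_cast at h1 h2 ⊢
    field_simp
    ring
  have hθ0 : φ (fourierTheta L 0) = 1 := by
    rw [show fourierTheta L 0 = 0 by ext <;> simp [fourierTheta]]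
    exact phiOf_zero hP0
  have hLC : (L : ℂ) ≠ 0 := by exact_mod_cast hL.ne'
  rw [Gfun, sum_congr rfl fun y _ => hsplit y, ← mul_sum, sum_add_distrib, sum_eL_Tset hx,
    ← add_sum_erase _ _ (zero_mem_Tset hL), eL_zero_right, hθ0, add_sub_cancel_left, greenRemainder]
  have hlam' : (lam : ℂ) ≠ 0 := by exact_mod_cast hlam.ne'
  have h1lam : 1 + (lam : ℂ) ≠ 0 := by exact_mod_cast (by linarith : (1 + lam : ℝ) ≠ 0)
  split_ifs <;> push_cast <;> field_simp <;> ring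

lemma norm_div_sub_inv_one_add_le {lam η : ℝ} (hlam : 0 < lam) (hη : η ≤ (2 * lam)⁻¹) {a b : ℂ}
    (ha : ‖a‖ ≤ η) (hb : ‖b‖ ≤ η) :
    ‖(((lam : ℝ) : ℂ)⁻¹ + a) / (1 + ((lam : ℝ) : ℂ)⁻¹ + b) - (((1 + lam)⁻¹ : ℝ) : ℂ)‖ ≤ 2 * η := by
  set r : ℝ := (1 + lam)⁻¹
  have hr0 : 0 ≤ r := by positivity
  have hr1 : r ≤ 1 := inv_le_one_of_one_le₀ (by linarith)
  have hB : 1 ≤ ‖1 + ((lam : ℝ) : ℂ)⁻¹ + b‖ := by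
    have h1 : ‖1 + ((lam : ℝ) : ℂ)⁻¹‖ = 1 + lam⁻¹ := by
      rw [← Complex.ofReal_inv, ← Complex.ofReal_one, ← Complex.ofReal_add, Complex.norm_real,
        Real.norm_of_nonneg (by positivity)]
    have h2 : (2 * lam)⁻¹ ≤ lam⁻¹ := inv_anti₀ hlam (by linarith)
    have h3 : ‖1 + ((lam : ℝ) : ℂ)⁻¹‖ ≤ ‖1 + ((lam : ℝ) : ℂ)⁻¹ + b‖ + ‖b‖ := by
      simpa using norm_sub_le (1 + ((lam : ℝ) : ℂ)⁻¹ + b) b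
    linarith
  have hB0 : 1 + ((lam : ℝ) : ℂ)⁻¹ + b ≠ 0 := norm_pos_iff.1 (by linarith)
  -- `r (1 + λ⁻¹) = λ⁻¹` cancels the main terms
  have hnum : ((lam : ℝ) : ℂ)⁻¹ + a - (1 + ((lam : ℝ) : ℂ)⁻¹ + b) * r = a - b * r := by
    have : (lam : ℂ) ≠ 0 := by exact_mod_cast hlam.ne'
    have : (1 + lam : ℂ) ≠ 0 := by exact_mod_cast (by linarith : (1 + lam : ℝ) ≠ 0)
    simp only [r]
    push_cast
    field_simp
    ring
  rw [div_sub' hB0, norm_div, hnum]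
  calc ‖a - b * r‖ / ‖1 + ((lam : ℝ) : ℂ)⁻¹ + b‖ ≤ ‖a - b * r‖ := div_le_self (norm_nonneg _) hB
    _ ≤ ‖a‖ + ‖b‖ * r := by
        simpa [Real.norm_of_nonneg hr0] using norm_sub_le a (b * r)
    _ ≤ 2 * η := by nlinarith [norm_nonneg b]

lemma fourierTheta_ne_zero {L : ℕ} (hL : 0 < L) {y : ℤ × ℤ} (hy : y ≠ 0) :
    fourierTheta L y ≠ 0 := by
  intro h
  have h0 : supNorm (fourierTheta L y) = 0 := by simp [h, supNorm]
  have : natSupNorm y ≠ 0 := mt natSupNorm_eq_zero.1 hy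
  rw [supNorm_fourierTheta] at h0
  have : (0 : ℝ) < L := by exact_mod_cast hL
  have : (0 : ℝ) < natSupNorm y := by exact_mod_cast Nat.pos_of_ne_zero ‹_›
  have : 0 < 2 * π * natSupNorm y / L := by positivity
  linarith

lemma supNorm_fourierTheta_le_pi {L : ℕ} {y : ℤ × ℤ} (hy : y ∈ Tset L) :
    supNorm (fourierTheta L y) ≤ π := by
  rw [supNorm_fourierTheta]
  rcases Nat.eq_zero_or_pos L with rfl | hL
  · simp [pi_nonneg]
  have : (2 * natSupNorm y : ℝ) ≤ L := by exact_mod_cast two_mul_natSupNorm_le hy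
  rw [div_le_iff₀ (by exact_mod_cast hL)]
  nlinarith [pi_pos]

section RemainderMass

variable {φ : ℝ × ℝ → ℝ} {L : ℕ} {lam : ℝ}

lemma remainderMass_filter_add_filter_not (s : Finset (ℤ × ℤ)) (p : ℤ × ℤ → Prop)
    [DecidablePred p] : remainderMass φ L lam s =
      remainderMass φ L lam (s.filter p) + remainderMass φ L lam (s.filter (¬ p ·)) := by
  simp only [remainderMass, ← mul_add, sum_filter_add_sum_filter_not]

lemma remainderMass_nonneg (hφ : ∀ θ, |φ θ| ≤ 1) (hlam : 0 ≤ lam) (s : Finset (ℤ × ℤ)) :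
    0 ≤ remainderMass φ L lam s :=
  mul_nonneg (by positivity) (sum_nonneg fun y _ =>
    div_nonneg (abs_nonneg _) (by linarith [(abs_le.1 (hφ (fourierTheta L y))).2]))

lemma remainderMass_le_card_mul {s : Finset (ℤ × ℤ)} {B : ℝ}
    (hB : ∀ y ∈ s, |φ (fourierTheta L y)| / (1 + lam - φ (fourierTheta L y)) ≤ B) :
    remainderMass φ L lam s ≤ #s * B / L ^ 2 := by
  rw [remainderMass, inv_mul_eq_div]
  gcongr
  simpa using sum_le_card_nsmul s _ B hB

lemma remainderMass_le_of_quadratic_gap (hφ : ∀ θ, |φ θ| ≤ 1) (hL : 0 < L) {c : ℝ} (hc : 0 < c)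
    {s : Finset (ℤ × ℤ)} (hs : s ⊆ (Tset L).erase 0)
    (hgap : ∀ y ∈ s, c * sqNormR (fourierTheta L y) ≤ 1 + lam - φ (fourierTheta L y)) :
    remainderMass φ L lam s ≤ 3 * (1 + Real.log L) / (π ^ 2 * c) := by
  have hLR : (0 : ℝ) < L := by exact_mod_cast hL
  have hterm : ∀ y ∈ s, |φ (fourierTheta L y)| / (1 + lam - φ (fourierTheta L y))
      ≤ (L : ℝ) ^ 2 / (4 * π ^ 2 * c) * (sqNorm y)⁻¹ := by
    intro y hy
    obtain ⟨hy0, -⟩ := mem_erase.1 (hs hy)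
    have hy1 : (1 : ℝ) ≤ natSupNorm y := by
      exact_mod_cast Nat.one_le_iff_ne_zero.2 (mt natSupNorm_eq_zero.1 hy0)
    have hsq : 0 < sqNorm y := by nlinarith [sq_natSupNorm_le_sqNorm y]
    have hQ : 0 < c * sqNormR (fourierTheta L y) := by
      rw [sqNormR_fourierTheta]; positivity
    calc |φ (fourierTheta L y)| / (1 + lam - φ (fourierTheta L y))
        ≤ 1 / (c * sqNormR (fourierTheta L y)) :=
          div_le_div₀ zero_le_one (hφ _) hQ (hgap y hy)
      _ = (L : ℝ) ^ 2 / (4 * π ^ 2 * c) * (sqNorm y)⁻¹ := by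
          rw [sqNormR_fourierTheta]
          field_simp
  have hsum : ∑ y ∈ s, (sqNorm y)⁻¹ ≤ 12 * (1 + Real.log L) :=
    (sum_le_sum_of_subset_of_nonneg hs fun y _ _ =>
      inv_nonneg.2 (by unfold sqNorm; positivity)).trans (sum_inv_sqNorm_le L)
  calc remainderMass φ L lam s
      ≤ ((L : ℝ) ^ 2)⁻¹ * ∑ y ∈ s, (L : ℝ) ^ 2 / (4 * π ^ 2 * c) * (sqNorm y)⁻¹ := by
        rw [remainderMass]; gcongr with y hy; exact hterm y hy
    _ = (∑ y ∈ s, (sqNorm y)⁻¹) / (4 * π ^ 2 * c) := by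
        rw [← mul_sum]; field_simp
    _ ≤ 12 * (1 + Real.log L) / (4 * π ^ 2 * c) := by gcongr
    _ = 3 * (1 + Real.log L) / (π ^ 2 * c) := by ring

lemma remainderMass_le_of_spectral_gap (hφ : ∀ θ, |φ θ| ≤ 1) (hL : 0 < L) {a ζ : ℝ} (hζ : 0 < ζ)
    (haL : π ≤ a * L) {s : Finset (ℤ × ℤ)} (hsa : ∀ y ∈ s, supNorm (fourierTheta L y) ≤ a)
    (hgap : ∀ y ∈ s, ζ ≤ 1 + lam - φ (fourierTheta L y)) :
    remainderMass φ L lam s ≤ 4 * a ^ 2 / (π ^ 2 * ζ) := by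
  have hLR : (0 : ℝ) < L := by exact_mod_cast hL
  set r := a * L / (2 * π)
  have hr : 1 / 2 ≤ r := by rw [le_div_iff₀ (by positivity)]; linarith
  have hcard : (#s : ℝ) ≤ (2 * r + 1) ^ 2 := by
    refine card_le_of_natSupNorm_le (by linarith) fun y hy => ?_
    have := hsa y hy
    rw [supNorm_fourierTheta, div_le_iff₀ hLR] at this
    rw [le_div_iff₀ (by positivity)]
    linarith
  calc remainderMass φ L lam s ≤ #s * (1 / ζ) / L ^ 2 :=
        remainderMass_le_card_mul fun y hy => div_le_div₀ zero_le_one (hφ _) hζ (hgap y hy)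
    _ ≤ (4 * r) ^ 2 * (1 / ζ) / L ^ 2 := by
        gcongr
        exact hcard.trans (pow_le_pow_left₀ (by linarith) (by linarith) 2)
    _ = 4 * a ^ 2 / (π ^ 2 * ζ) := by
        simp only [r]
        field_simp
        ring

lemma remainderMass_le_of_abs_le (hlam : 0 ≤ lam) (hL : 0 < L) {ε : ℝ} (hε0 : 0 ≤ ε)
    (hε : ε ≤ 1 / 2) {s : Finset (ℤ × ℤ)} (hs : s ⊆ Tset L)
    (hsmall : ∀ y ∈ s, |φ (fourierTheta L y)| ≤ ε) :
    remainderMass φ L lam s ≤ 2 * ε := by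
  have hLR : (0 : ℝ) < L := by exact_mod_cast hL
  have hcard : (#s : ℝ) ≤ L ^ 2 := by exact_mod_cast (card_le_card hs).trans (card_Tset L).le
  calc remainderMass φ L lam s ≤ #s * (ε / (1 / 2)) / L ^ 2 :=
        remainderMass_le_card_mul fun y hy => by
          have := hsmall y hy
          exact div_le_div₀ hε0 this (by norm_num) (by linarith [(abs_le.1 this).2])
    _ ≤ L ^ 2 * (ε / (1 / 2)) / L ^ 2 := by gcongr
    _ = 2 * ε := by field_simp

end RemainderMass

lemma remainderMass_Tset_le {φ : ℝ × ℝ → ℝ} (hφ : ∀ θ, |φ θ| ≤ 1) {L : ℕ} (hL : 0 < L) {lam : ℝ}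
    (hlam : 0 ≤ lam) {r a c ζ ε : ℝ} (hc : 0 < c) (hζ : 0 < ζ) (haL : π ≤ a * L) (hε0 : 0 ≤ ε)
    (hε : ε ≤ 1 / 2)
    (hlow : ∀ θ, θ ≠ 0 → supNorm θ ≤ r → c * sqNormR θ ≤ 1 - φ θ)
    (hmid : ∀ θ, supNorm θ ≤ a → ¬ supNorm θ ≤ r → ζ ≤ 1 - φ θ)
    (hhigh : ∀ θ, supNorm θ ≤ π → ¬ supNorm θ ≤ a → |φ θ| ≤ ε) :
    remainderMass φ L lam ((Tset L).erase 0)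
      ≤ 3 * (1 + Real.log L) / (π ^ 2 * c) + 4 * a ^ 2 / (π ^ 2 * ζ) + 2 * ε := by
  classical
  set T' := (Tset L).erase 0
  set low := fun y => supNorm (fourierTheta L y) ≤ r
  set mid := fun y => supNorm (fourierTheta L y) ≤ a
  rw [remainderMass_filter_add_filter_not T' low,
    remainderMass_filter_add_filter_not (T'.filter (¬ low ·)) mid, ← add_assoc]
  gcongr
  · refine remainderMass_le_of_quadratic_gap hφ hL hc (filter_subset _ _) fun y hy => ?_
    obtain ⟨hyT, hyl⟩ := mem_filter.1 hy
    linarith [hlow _ (fourierTheta_ne_zero hL (mem_erase.1 hyT).1) hyl]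
  · refine remainderMass_le_of_spectral_gap hφ hL hζ haL (fun y hy => (mem_filter.1 hy).2)
      fun y hy => ?_
    simp only [T', mem_filter] at hy
    linarith [hmid _ hy.2 hy.1.2]
  · refine remainderMass_le_of_abs_le hlam hL hε0 hε
      (fun y hy => mem_of_mem_erase (filter_subset _ _ (filter_subset _ _ hy))) fun y hy => ?_
    simp only [T', mem_filter, mem_erase] at hy
    exact hhigh _ (supNorm_fourierTheta_le_pi hy.1.1.2) hy.2

lemma eventually_even_evenAtTop : ∀ᶠ L in evenAtTop, Even L :=
  eventually_inf_principal.2 (Eventually.of_forall fun _ h => h)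

lemma eventually_ge_evenAtTop (n : ℕ) : ∀ᶠ L in evenAtTop, n ≤ L :=
  (eventually_ge_atTop n).filter_mono inf_le_left

lemma tendsto_one_add_log_div_sq {M : ℕ → ℕ}
    (hM2 : Tendsto (fun L : ℕ => (M L : ℝ) ^ 2 / Real.log L) evenAtTop atTop) :
    Tendsto (fun L : ℕ => (1 + Real.log L) / (M L : ℝ) ^ 2) evenAtTop (𝓝 0) := by
  have hlog : ∀ᶠ L : ℕ in evenAtTop, 1 ≤ Real.log L := by
    filter_upwards [eventually_ge_evenAtTop 3] with L hL
    have : (3 : ℝ) ≤ L := by exact_mod_cast hL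
    rw [Real.le_log_iff_exp_le (by linarith)]
    linarith [Real.exp_one_lt_d9]
  refine squeeze_zero' ?_ ?_ (by simpa using hM2.inv_tendsto_atTop.const_mul 2)
  · filter_upwards [hlog] with L hL
    positivity
  · filter_upwards [hlog] with L hL
    rw [mul_div_assoc']
    gcongr
    linarith

lemma CondP1.exists_quadratic_gap {M : ℕ → ℕ} {q : ℕ → ℤ × ℤ → ℝ} {σ2 : ℝ}
    (hP1 : CondP1 M q σ2) (hσ : 0 < σ2) :
    ∃ δ > 0, ∀ᶠ L in evenAtTop, ∀ θ, θ ≠ 0 → supNorm θ ≤ δ / M L →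
      σ2 * (M L : ℝ) ^ 2 / 4 * sqNormR θ ≤ 1 - phiOf (M L) (q L) θ := by
  obtain ⟨δ, hδ, h⟩ := hP1 (1 / 2) one_half_pos
  refine ⟨δ, hδ, h.mono fun L hL θ hθ hθδ => ?_⟩
  have hQ : 0 ≤ σ2 * (M L : ℝ) ^ 2 * sqNormR θ / 2 := by unfold sqNormR; positivity
  have hlow := (hL θ hθ hθδ).1
  rcases hQ.eq_or_lt with h0 | h0
  · rw [← h0, div_zero] at hlow
    norm_num at hlow
  · linarith [(lt_div_iff₀ h0).1 hlow]

theorem tendsto_remainderMass (M : ℕ → ℕ) (q : ℕ → ℤ × ℤ → ℝ) {σ2 : ℝ} (hσ : 0 < σ2)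
    (hP0 : ∀ L : ℕ, Even L → 0 < L → CondP0 (M L) (q L))
    (hP1 : CondP1 M q σ2) (hP2 : CondP2 M q) (hP3 : CondP3 M q)
    (hM2 : Tendsto (fun L : ℕ => (M L : ℝ) ^ 2 / Real.log L) evenAtTop atTop)
    {lam : ℝ} (hlam : 0 < lam) :
    Tendsto (fun L : ℕ =>
        remainderMass (phiOf (M L) (q L)) L (lam / (L : ℝ) ^ 2) ((Tset L).erase 0))
      evenAtTop (𝓝 0) := by
  have hP0' : ∀ᶠ L in evenAtTop, 0 < L ∧ ∀ θ, |phiOf (M L) (q L) θ| ≤ 1 := by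
    filter_upwards [eventually_even_evenAtTop, eventually_ge_evenAtTop 1] with L hE hL
    exact ⟨hL, abs_phiOf_le_one (hP0 L hE hL)⟩
  refine tendsto_order.2 ⟨fun b hb => ?_, fun η hη => ?_⟩
  · filter_upwards [hP0'] with L hL
    exact hb.trans_le (remainderMass_nonneg hL.2 (by positivity) _)
  obtain ⟨δ, hδ, hquad⟩ := hP1.exists_quadratic_gap hσ
  obtain ⟨δ', hδ', ζ, hζ, hgap⟩ := hP2 δ hδ
  set ε := min (η / 8) (1 / 2)
  have hε : 0 < ε := lt_min (by positivity) one_half_pos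
  set a := min δ' (π * √(η * ζ / 16))
  have ha : 0 < a := lt_min hδ' (by positivity)
  have ha2 : 4 * a ^ 2 / (π ^ 2 * ζ) ≤ η / 4 := by
    have : a ^ 2 ≤ π ^ 2 * (η * ζ / 16) := by
      calc a ^ 2 ≤ (π * √(η * ζ / 16)) ^ 2 := pow_le_pow_left₀ ha.le (min_le_right _ _) 2
        _ = π ^ 2 * (η * ζ / 16) := by rw [mul_pow, Real.sq_sqrt (by positivity)]
    rw [div_le_iff₀ (by positivity)]
    nlinarith [pi_pos]
  filter_upwards [hP0', hquad, hgap, hP3 ε hε a ha, hM2.eventually_gt_atTop 0,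
    (tendsto_one_add_log_div_sq hM2).eventually
      (gt_mem_nhds (by positivity : 0 < η * π ^ 2 * σ2 / 24)),
    eventually_ge_evenAtTop ⌈π / a⌉₊] with L hL hquadL hgapL hsmallL hM hlogL haL
  have hMpos : (0 : ℝ) < (M L : ℝ) ^ 2 := by
    rcases (sq_nonneg (M L : ℝ)).eq_or_lt with h | h
    · simp [← h] at hM
    · exact h
  have hπa : π ≤ a * L := by
    rw [← div_le_iff₀' ha]; exact (Nat.le_ceil _).trans (by exact_mod_cast haL)
  refine (remainderMass_Tset_le hL.2 hL.1 (by positivity) (by positivity) hζ hπa hε.le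
    (min_le_right _ _) hquadL (fun θ hθa hθδ => (hgapL θ (hθa.trans (min_le_left _ _)) hθδ).le)
    fun θ hθπ hθa => (hsmallL θ hθπ hθa).le).trans_lt ?_
  have hlowFreq : 3 * (1 + Real.log L) / (π ^ 2 * (σ2 * (M L : ℝ) ^ 2 / 4)) < η / 2 := by
    rw [div_lt_iff₀ hMpos] at hlogL
    rw [div_lt_iff₀ (by positivity)]
    nlinarith [pi_pos]
  have hhighFreq : 2 * ε ≤ η / 4 := by linarith [min_le_left (η / 8) (1 / 2)]
  linarith

theorem homogeneous_mixing_exp_law_general (M : ℕ → ℕ) (q : ℕ → ℤ × ℤ → ℝ) (σ2 : ℝ) (hσ : 0 < σ2)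
    (hP0 : ∀ L : ℕ, Even L → 0 < L → CondP0 (M L) (q L))
    (hP1 : CondP1 M q σ2) (hP2 : CondP2 M q) (hP3 : CondP3 M q)
    (hM2 : Tendsto (fun L : ℕ => (M L : ℝ) ^ 2 / Real.log L) evenAtTop atTop) :
    ∀ lam > (0 : ℝ), ∀ ε > (0 : ℝ), ∀ᶠ (L : ℕ) in evenAtTop, ∀ x ∈ (Tset L).erase 0,
      ‖Gfun M q L x (lam / (L : ℝ) ^ 2) / Gfun M q L 0 (lam / (L : ℝ) ^ 2)
          - (((1 + lam)⁻¹ : ℝ) : ℂ)‖ < ε := by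
  intro lam hlam ε hε
  set η := min (2 * lam)⁻¹ (ε / 3)
  have hη : 0 < η := lt_min (by positivity) (by positivity)
  filter_upwards [(tendsto_remainderMass M q hσ hP0 hP1 hP2 hP3 hM2 hlam).eventually
    (ge_mem_nhds hη), eventually_even_evenAtTop, eventually_ge_evenAtTop 1] with L hmass hE hL x hx
  have hP0L := hP0 L hE hL
  have hlamL : 0 < lam / (L : ℝ) ^ 2 := by positivity
  have hR : ∀ x, ‖greenRemainder (phiOf (M L) (q L)) L x (lam / (L : ℝ) ^ 2)‖ ≤ η := fun x =>
    (norm_greenRemainder_le (abs_phiOf_le_one hP0L) L x hlamL.le).trans hmass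
  have hc : ((1 + lam / (L : ℝ) ^ 2 : ℝ) : ℂ)⁻¹ ≠ 0 := by
    exact_mod_cast (inv_pos.2 (by positivity : 0 < 1 + lam / (L : ℝ) ^ 2)).ne'
  rw [Gfun_eq M q hL hP0L (mem_of_mem_erase hx) hlamL, Gfun_eq M q hL hP0L (zero_mem_Tset hL) hlamL,
    if_neg (ne_of_mem_erase hx), if_pos rfl, mul_div_mul_left _ _ hc, zero_add,
    mul_div_cancel₀ _ (by positivity)]
  exact (norm_div_sub_inv_one_add_le hlam (min_le_left _ _) (hR x) (hR 0)).trans_lt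
    (by linarith [min_le_right (2 * lam)⁻¹ (ε / 3)])

/-- Theorem 1.2 (homogeneous-mixing exponential limit law): if (P0)–(P3) hold
and `M_L²/log L → ∞`, then for every `λ > 0`,
`sup_{x ∈ T'_L} |E_x(e^{−λH_L/L²}) − (1+λ)⁻¹| → 0`, where
`E_x(e^{−λH_L}) = G_L(x,λ)/G_L(0,λ)`. -/
theorem homogeneous_mixing_exp_law (M : ℕ → ℕ) (q : ℕ → ℤ × ℤ → ℝ) (σ2 : ℝ) (hσ : 0 < σ2)
    (hMeven : ∀ L : ℕ, Even (M L) ∧ 0 < M L)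
    (hP0 : ∀ L : ℕ, Even L → 0 < L → CondP0 (M L) (q L))
    (hP1 : CondP1 M q σ2) (hP2 : CondP2 M q) (hP3 : CondP3 M q)
    (hM2 : Tendsto (fun L : ℕ => (M L : ℝ) ^ 2 / Real.log L) evenAtTop atTop) :
    ∀ lam > (0 : ℝ), ∀ ε > (0 : ℝ), ∀ᶠ (L : ℕ) in evenAtTop, ∀ x ∈ (Tset L).erase 0,
      ‖Gfun M q L x (lam / (L : ℝ) ^ 2) / Gfun M q L 0 (lam / (L : ℝ) ^ 2)
          - (((1 + lam)⁻¹ : ℝ) : ℂ)‖ < ε :=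
  homogeneous_mixing_exp_law_general M q σ2 hσ hP0 hP1 hP2 hP3 hM2
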